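/- arXiv:1807.03340 — 3 statements merged into one kernel-verified Lean document; each statement's English description precedes it below -/
import Mathlib

section
/- For every natural number n ≥ 1, the generalized Tribonacci number H_n satisfies H_n = 3·T_{n+1} - 3·T_n - T_{n-1}, where T_n is the n-th Tribonacci number. -/
/-- The Tribonacci sequence. -/
def trib : ℕ → ℤ
  | 0 => 0
  | 1 => 1
  | 2 => 1
  | n + 3 => trib (n + 2) + trib (n + 1) + trib n

/-- The generalized Tribonacci sequence. -/
def genTrib : ℕ → ℤ
  | 0 => 3
  | 1 => 0
  | 2 => 2
  | n + 3 => genTrib (n + 2) + genTrib (n + 1) + genTrib n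

lemma aux : ∀ n, genTrib n = 3 * trib (n + 1) - 3 * trib n - trib (n - 1)
  | 0 => by decide
  | 1 => by decide
  | 2 => by decide
  | 3 => by decide
  | n + 4 => by
    have h1 : genTrib (n+3) = 3 * trib (n+4) - 3 * trib (n+3) - trib (n+2) := aux (n+3)
    have h2 : genTrib (n+2) = 3 * trib (n+3) - 3 * trib (n+2) - trib (n+1) := aux (n+2)
    have h3 : genTrib (n+1) = 3 * trib (n+2) - 3 * trib (n+1) - trib n := aux (n+1)
    show genTrib (n+4) = 3 * trib (n+5) - 3 * trib (n+4) - trib (n+3)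
    have g1 : genTrib (n+4) = genTrib (n+3) + genTrib (n+2) + genTrib (n+1) := rfl
    have t1 : trib (n+5) = trib (n+4) + trib (n+3) + trib (n+2) := rfl
    have t2 : trib (n+4) = trib (n+3) + trib (n+2) + trib (n+1) := rfl
    have t3 : trib (n+3) = trib (n+2) + trib (n+1) + trib n := rfl
    linarith

theorem genTrib_eq_trib_combination (n : ℕ) (hn : 1 ≤ n) :
    genTrib n = 3 * trib (n + 1) - 3 * trib n - trib (n - 1) := aux n
end

section
/- For every natural number n ≥ 3, the Tribonacci numbers satisfy the Cassini-type identity T_{n-1}³ + T_{n-2}²·T_{n+1} + T_{n-3}·T_n² - 2·T_{n-2}·T_{n-1}·T_n - T_{n-3}·T_{n-1}·T_{n+1} = 1. -/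
lemma trib_aux (m : ℕ) :
    trib (m + 2) ^ 3 + trib (m + 1) ^ 2 * trib (m + 4) +
      trib m * trib (m + 3) ^ 2 - 2 * trib (m + 1) * trib (m + 2) * trib (m + 3) -
      trib m * trib (m + 2) * trib (m + 4) = 1 := by
  induction m with
  | zero => decide
  | succ k ih =>
    have h3 : trib (k + 3) = trib (k + 2) + trib (k + 1) + trib k := rfl
    have h4 : trib (k + 4) = trib (k + 3) + trib (k + 2) + trib (k + 1) := rfl
    have h5 : trib (k + 5) = trib (k + 4) + trib (k + 3) + trib (k + 2) := rfl
    show trib (k + 3) ^ 3 + trib (k + 2) ^ 2 * trib (k + 5) +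
      trib (k+1) * trib (k + 4) ^ 2 - 2 * trib (k + 2) * trib (k + 3) * trib (k + 4) -
      trib (k+1) * trib (k + 3) * trib (k + 5) = 1
    rw [h4, h3] at ih
    rw [h5, h4, h3]
    linear_combination ih

theorem trib_cassini (n : ℕ) (hn : 3 ≤ n) :
    trib (n - 1) ^ 3 + trib (n - 2) ^ 2 * trib (n + 1) +
      trib (n - 3) * trib n ^ 2 - 2 * trib (n - 2) * trib (n - 1) * trib n -
      trib (n - 3) * trib (n - 1) * trib (n + 1) = 1 := by
  obtain ⟨m, rfl⟩ := Nat.exists_eq_add_of_le hn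
  have := trib_aux m
  simpa [Nat.add_comm 3 m, show m + 3 - 1 = m + 2 from rfl,
    show m + 3 - 2 = m + 1 from rfl, show m + 3 - 3 = m from rfl] using this
end

section
/- Let α, ω₁, ω₂ be the three (pairwise distinct) complex roots of x³ - x² - x - 1 = 0. Then for every natural number n ≥ 2, α·T_n + (1 + ω₁ω₂)·T_{n-1} + T_{n-2} = αⁿ, where T_n is the n-th Tribonacci number. -/
lemma trib_key (α : ℂ) (hα : α ^ 3 = α ^ 2 + α + 1) :
    ∀ m : ℕ, α * trib (m + 2) + (α ^ 2 - α) * trib (m + 1) + trib m = α ^ (m + 2) := by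
  intro m
  induction m with
  | zero => norm_num [trib]
  | succ k ih =>
    show α * trib (k + 3) + (α ^ 2 - α) * trib (k + 2) + trib (k + 1) = α ^ (k + 3)
    rw [show trib (k + 3) = trib (k + 2) + trib (k + 1) + trib k from rfl]
    have : α ^ (k + 3) = α * α ^ (k + 2) := by ring
    rw [this, ← ih]
    push_cast
    linear_combination (-(trib (k + 1) : ℂ)) * hα

theorem trib_alpha_power (α ω₁ ω₂ : ℂ)
    (hne₁ : α ≠ ω₁) (hne₂ : α ≠ ω₂) (hne₃ : ω₁ ≠ ω₂)
    (hroots : ∀ x : ℂ, x ^ 3 - x ^ 2 - x - 1 = (x - α) * (x - ω₁) * (x - ω₂))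
    (n : ℕ) (hn : 2 ≤ n) :
    α * trib n + (1 + ω₁ * ω₂) * trib (n - 1) + trib (n - 2) = α ^ n := by
  have hα : α ^ 3 = α ^ 2 + α + 1 := by linear_combination hroots α
  have hp : 1 + ω₁ * ω₂ = α ^ 2 - α := by
    linear_combination (-(1/2 : ℂ) - α/2) * (hroots 1) + ((1/2 : ℂ) - α/2) * (hroots (-1))
      + α * (hroots 0)
  obtain ⟨m, rfl⟩ : ∃ m, n = m + 2 := ⟨n - 2, by omega⟩
  have h1 : m + 2 - 1 = m + 1 := by omega
  have h2 : m + 2 - 2 = m := by omega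
  rw [h1, h2, hp]
  exact trib_key α hα m
end
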